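/- arXiv:0712.1867 — 5 statements merged into one kernel-verified Lean document; each statement's English description precedes it below -/
import Mathlib

section
/- Let U, V, {v'} be disjoint subsets of R^d with U ∪ V ∪ {v'} discrete, non-equidistant, and with no descending chains. Let m be the unique stable bipartite partial matching between U and V, and m' the unique stable bipartite partial matching between U and V ∪ {v'}. Then for every u ∈ U, |u − m'(u)| ≤ |u − m(u)| (with the convention |x − m(x)| = ∞ when x is unmatched). -/
open scoped ENNReal

/-- Distance from `x` to its partner under a partial matching `m`; `∞` if unmatched. -/
noncomputable def partnerEDist {E : Type*} [PseudoEMetricSpace E]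
    (m : E → Option E) (x : E) : ℝ≥0∞ :=
  match m x with
  | some y => edist x y
  | none => ⊤

/-- `m` is a partial matching of the set `U`. -/
def IsPartialMatching {E : Type*} (U : Set E) (m : E → Option E) : Prop :=
  (∀ x, x ∉ U → m x = none) ∧
  ∀ x ∈ U, ∀ y, m x = some y → y ∈ U ∧ y ≠ x ∧ m y = some x

/-- `m` is a stable matching of `U`. -/
def IsStableMatching {E : Type*} [PseudoEMetricSpace E] (U : Set E) (m : E → Option E) : Prop :=
  ∀ x ∈ U, ∀ y ∈ U, x ≠ y →
    ¬ (edist x y < min (partnerEDist m x) (partnerEDist m y))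

/-- `U` is discrete (locally finite). -/
def DiscreteSet {E : Type*} [PseudoMetricSpace E] (U : Set E) : Prop :=
  ∀ (p : E) (r : ℝ), (U ∩ Metric.ball p r).Finite

/-- `U` is non-equidistant: no two distinct unordered pairs realize the same
positive distance. -/
def NonEquidistant {E : Type*} [PseudoMetricSpace E] (U : Set E) : Prop :=
  ¬ ∃ w ∈ U, ∃ x ∈ U, ∃ y ∈ U, ∃ z ∈ U,
      ({w, x} : Set E) ≠ {y, z} ∧ dist w x = dist y z ∧ 0 < dist w x

/-- `U` has no descending chains. -/
def NoDescendingChain {E : Type*} [PseudoMetricSpace E] (U : Set E) : Prop :=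
  ¬ ∃ x : ℕ → E, (∀ n, x n ∈ U) ∧ StrictAnti (fun n => dist (x n) (x (n + 1)))

/-- `m` is a bipartite partial matching between `U` and `V`. -/
def IsBipartiteMatching {E : Type*} (U V : Set E) (m : E → Option E) : Prop :=
  (∀ x, x ∉ U ∪ V → m x = none) ∧
  (∀ x ∈ U, ∀ y, m x = some y → y ∈ V ∧ m y = some x) ∧
  (∀ x ∈ V, ∀ y, m x = some y → y ∈ U ∧ m y = some x)

/-- A bipartite matching between `U` and `V` is stable if no `x ∈ U`, `y ∈ V`
both prefer each other to their current partners. -/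
def IsBipartiteStable {E : Type*} [PseudoEMetricSpace E] (U V : Set E) (m : E → Option E) : Prop :=
  ∀ x ∈ U, ∀ y ∈ V, ¬ (edist x y < min (partnerEDist m x) (partnerEDist m y))

/-! If some `u ∈ U` had an `m`-partner `v` strictly closer than its `m'`-partner, stability of `m'`
at `(u, v)` would give `v` an `m'`-partner `u₁` with `|v - u₁| < |u - v|`, and then stability of `m`
at `(u₁, v)` would give `u₁` an `m`-partner `v₁` with `|u₁ - v₁| < |u₁ - v|`, so `u₁` is in the
situation of `u`. The two steps are one statement with the roles of `m` and `m'` exchanged, and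
non-equidistance makes the inequalities strict, so `u, v, u₁, v₁, …` is a descending chain. -/

section PartnerEDist

variable {E : Type*} [PseudoEMetricSpace E] {m : E → Option E} {x y : E}

theorem partnerEDist_of_eq_some (h : m x = some y) : partnerEDist m x = edist x y := by
  simp [partnerEDist, h]

theorem exists_eq_some_of_partnerEDist_lt_top (h : partnerEDist m x < ⊤) : ∃ y, m x = some y := by
  cases hx : m x with
  | none => simp [partnerEDist, hx] at h
  | some y => exact ⟨y, rfl⟩

end PartnerEDist

theorem IsBipartiteMatching.symm {E : Type*} {U V : Set E} {m : E → Option E}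
    (h : IsBipartiteMatching U V m) : IsBipartiteMatching V U m :=
  ⟨fun x hx => h.1 x (Set.union_comm U V ▸ hx), h.2.2, h.2.1⟩

theorem IsBipartiteStable.symm {E : Type*} [PseudoEMetricSpace E] {U V : Set E}
    {m : E → Option E} (h : IsBipartiteStable U V m) : IsBipartiteStable V U m :=
  fun x hx y hy => by rw [edist_comm, min_comm]; exact h y hy x hx

theorem NonEquidistant.edist_ne {E : Type*} [PseudoMetricSpace E] {S : Set E}
    (hS : NonEquidistant S) {w x y z : E} (hw : w ∈ S) (hx : x ∈ S) (hy : y ∈ S) (hz : z ∈ S)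
    (hne : ({w, x} : Set E) ≠ {y, z}) (hwx : 0 < dist w x) : edist w x ≠ edist y z :=
  fun h => hS ⟨w, hw, x, hx, y, hy, z, hz, hne, by rw [dist_edist, dist_edist, h], hwx⟩

def PrefersPartner {E : Type*} [PseudoEMetricSpace E] (m₁ m₂ : E → Option E) (a b : E) : Prop :=
  m₁ a = some b ∧ edist a b < partnerEDist m₂ a

theorem PrefersPartner.exists_prefersPartner_swap {E : Type*} [MetricSpace E]
    {S A₁ B₁ A₂ B₂ : Set E} {m₁ m₂ : E → Option E} {a b : E}
    (hS : NonEquidistant S) (hA₂ : A₂ ⊆ S) (hB₂ : B₂ ⊆ S) (hdisj : Disjoint A₂ B₁)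
    (hm₁ : IsBipartiteMatching A₁ B₁ m₁) (hm₂ : IsBipartiteMatching A₂ B₂ m₂)
    (hs₂ : IsBipartiteStable A₂ B₂ m₂) (ha₁ : a ∈ A₁) (ha₂ : a ∈ A₂) (hb : b ∈ B₂)
    (h : PrefersPartner m₁ m₂ a b) :
    ∃ c ∈ A₂, PrefersPartner m₂ m₁ b c ∧ edist b c < edist a b := by
  obtain ⟨hmab, hlt⟩ := h
  obtain ⟨hb₁, hba⟩ := hm₁.2.1 a ha₁ b hmab
  have hle : partnerEDist m₂ b ≤ edist a b := by
    by_contra! hgt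
    exact hs₂ a ha₂ b hb (lt_min hlt hgt)
  obtain ⟨c, hbc⟩ := exists_eq_some_of_partnerEDist_lt_top (hle.trans_lt (edist_lt_top a b))
  obtain ⟨hc, hcb⟩ := hm₂.2.2 b hb c hbc
  rw [partnerEDist_of_eq_some hbc] at hle
  have hab : a ≠ b := by
    rintro rfl
    exact Set.disjoint_left.mp hdisj ha₂ hb₁
  have hca : c ≠ a := by
    rintro rfl
    rw [partnerEDist_of_eq_some hcb] at hlt
    exact hlt.false
  have hne : ({a, b} : Set E) ≠ {b, c} := by
    rw [Ne, Set.pair_eq_pair_iff]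
    rintro (⟨h, -⟩ | ⟨h, -⟩)
    exacts [hab h, hca h.symm]
  have hshort : edist b c < edist a b :=
    hle.lt_of_ne (hS.edist_ne (hA₂ ha₂) (hB₂ hb) (hB₂ hb) (hA₂ hc) hne (dist_pos.2 hab)).symm
  refine ⟨c, hc, ⟨hbc, ?_⟩, hshort⟩
  rwa [partnerEDist_of_eq_some hba, edist_comm b a]

theorem NoDescendingChain.not_rel_of_forall_exists_shorter {E : Type*} [PseudoMetricSpace E]
    {S : Set E} (hS : NoDescendingChain S) {R : E → E → Prop}
    (hRS : ∀ a b, R a b → a ∈ S ∧ b ∈ S)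
    (hstep : ∀ a b, R a b → ∃ c, R b c ∧ edist b c < edist a b) {a b : E} : ¬ R a b := by
  intro hab
  choose! next hnext hshort using hstep
  let p : ℕ → E × E := fun n => (fun q : E × E => (q.2, next q.1 q.2))^[n] (a, b)
  have hp : ∀ n, p (n + 1) = ((p n).2, next (p n).1 (p n).2) :=
    fun n => Function.iterate_succ_apply' _ n _
  have hR : ∀ n, R (p n).1 (p n).2 := by
    intro n
    induction n with
    | zero => exact hab
    | succ n ih => rw [hp]; exact hnext _ _ ih
  refine hS ⟨fun n => (p n).1, fun n => (hRS _ _ (hR n)).1, strictAnti_nat_of_succ_lt fun n => ?_⟩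
  simp only [hp]
  have h := hshort _ _ (hR n)
  rwa [edist_dist, edist_dist, ENNReal.ofReal_lt_ofReal_iff_of_nonneg dist_nonneg] at h

theorem stable_bipartite_monotone_general (d : ℕ)
    (U V : Set (EuclideanSpace ℝ (Fin d))) (v' : EuclideanSpace ℝ (Fin d))
    (hUV : Disjoint U V)
    (h2 : NonEquidistant (U ∪ V ∪ {v'}))
    (h3 : NoDescendingChain (U ∪ V ∪ {v'}))
    (m m' : EuclideanSpace ℝ (Fin d) → Option (EuclideanSpace ℝ (Fin d)))
    (hm : IsBipartiteMatching U V m) (hms : IsBipartiteStable U V m)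
    (hm' : IsBipartiteMatching U (V ∪ {v'}) m') (hms' : IsBipartiteStable U (V ∪ {v'}) m') :
    ∀ u ∈ U, partnerEDist m' u ≤ partnerEDist m u := by
  intro u hu
  by_contra! hlt
  obtain ⟨v, hv⟩ := exists_eq_some_of_partnerEDist_lt_top (hlt.trans_le le_top)
  have hU : U ⊆ U ∪ V ∪ {v'} := fun x hx => Or.inl (Or.inl hx)
  have hV : V ⊆ U ∪ V ∪ {v'} := fun x hx => Or.inl (Or.inr hx)
  have hV' : V ∪ {v'} ⊆ U ∪ V ∪ {v'} := Set.union_subset_union_left _ Set.subset_union_right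
  -- The edges of the alternating path `u, m u, m' (m u), …`, which only get shorter.
  refine h3.not_rel_of_forall_exists_shorter
    (R := fun a b => a ∈ U ∧ b ∈ V ∧ PrefersPartner m m' a b ∨
      a ∈ V ∧ b ∈ U ∧ PrefersPartner m' m a b) ?_ ?_
    (Or.inl ⟨hu, (hm.2.1 u hu v hv).1, hv, by rwa [partnerEDist_of_eq_some hv] at hlt⟩)
  · rintro a b (⟨ha, hb, -⟩ | ⟨ha, hb, -⟩)
    exacts [⟨hU ha, hV hb⟩, ⟨hV ha, hU hb⟩]
  · rintro a b (⟨ha, hb, h⟩ | ⟨ha, hb, h⟩)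
    · obtain ⟨c, hc, hbc, hshort⟩ := h.exists_prefersPartner_swap h2 hU hV' hUV hm hm' hms' ha ha
        (Or.inl hb)
      exact ⟨c, Or.inr ⟨hb, hc, hbc⟩, hshort⟩
    · obtain ⟨c, hc, hbc, hshort⟩ := h.exists_prefersPartner_swap h2 hV hU hUV.symm hm'.symm
        hm.symm hms.symm (Or.inl ha) ha hb
      exact ⟨c, Or.inl ⟨hb, hc, hbc⟩, hshort⟩

/-- Monotonicity for two-color stable matching: adding an extra blue point `v'` makes
the matching no worse for every red point. -/
theorem stable_bipartite_monotone (d : ℕ)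
    (U V : Set (EuclideanSpace ℝ (Fin d))) (v' : EuclideanSpace ℝ (Fin d))
    (hUV : Disjoint U V) (hUv : v' ∉ U) (hVv : v' ∉ V)
    (h1 : DiscreteSet (U ∪ V ∪ {v'})) (h2 : NonEquidistant (U ∪ V ∪ {v'}))
    (h3 : NoDescendingChain (U ∪ V ∪ {v'}))
    (m m' : EuclideanSpace ℝ (Fin d) → Option (EuclideanSpace ℝ (Fin d)))
    (hm : IsBipartiteMatching U V m) (hms : IsBipartiteStable U V m)
    (hm' : IsBipartiteMatching U (V ∪ {v'}) m') (hms' : IsBipartiteStable U (V ∪ {v'}) m') :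
    ∀ u ∈ U, partnerEDist m' u ≤ partnerEDist m u :=
  stable_bipartite_monotone_general d U V v' hUV h2 h3 m m' hm hms hm' hms'
end

section
/- Let U ⊂ R^d (respectively, disjoint U, V ⊂ R^d with U ∪ V) be discrete, non-equidistant, and with no descending chains. Then there is a unique stable partial matching of U (respectively, a unique stable bipartite partial matching between U and V). Moreover, in the one-color case at most one point is unmatched, and in the two-color case all unmatched points lie in the same set (U or V). -/
open scoped ENNReal

/-!
Call two compatible points mutually nearest in a set `T` if each is the other's nearest
compatible point in `T`. In a discrete, non-equidistant set without descending chains that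
contains a compatible pair there is always a mutually nearest pair: otherwise, following
nearest compatible neighbours produces distances that strictly decrease, i.e. a descending
chain. Matching all mutually nearest pairs, removing them, and repeating this `ω` times gives a
matching. The points never removed contain no compatible pair: such a set would contain a
mutually nearest pair, and by discreteness only finitely many removed points lie near it, so the
pair is already mutually nearest at some finite stage. Stability follows by looking at the
stage where the first point of a candidate blocking pair is removed. Uniqueness is proved by
induction on the stage: any stable matching contains each pair removed at stage `n`, because
both of its points prefer each other to every partner that is still present at stage `n`.
-/

open Filter Metric

lemma partnerEDist_some {E : Type*} [PseudoEMetricSpace E] {m : E → Option E} {x y : E}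
    (h : m x = some y) : partnerEDist m x = edist x y := by
  simp [partnerEDist, h]

lemma partnerEDist_le_edist {E : Type*} [PseudoMetricSpace E] {m : E → Option E} {x y z : E}
    (h : m x = some z) (hd : dist x z ≤ dist x y) : partnerEDist m x ≤ edist x y := by
  rw [partnerEDist_some h, edist_dist, edist_dist]
  exact ENNReal.ofReal_le_ofReal hd

lemma edist_lt_partnerEDist {E : Type*} [PseudoMetricSpace E] {m : E → Option E} {x y : E}
    (h : ∀ z, m x = some z → dist x y < dist x z) : edist x y < partnerEDist m x := by
  cases hm : m x with
  | none => simpa [partnerEDist, hm] using edist_lt_top x y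
  | some z =>
    rw [partnerEDist_some hm, edist_dist, edist_dist]
    exact ENNReal.ofReal_lt_ofReal_iff_of_nonneg dist_nonneg |>.2 (h z hm)

section PointSets

variable {E : Type*} [MetricSpace E] {S T : Set E}

lemma DiscreteSet.mono (h : DiscreteSet S) (hTS : T ⊆ S) : DiscreteSet T :=
  fun p r => (h p r).subset (Set.inter_subset_inter_left _ hTS)

lemma NonEquidistant.mono (h : NonEquidistant S) (hTS : T ⊆ S) : NonEquidistant T :=
  fun ⟨w, hw, x, hx, y, hy, z, hz, hne⟩ => h ⟨w, hTS hw, x, hTS hx, y, hTS hy, z, hTS hz, hne⟩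

lemma NoDescendingChain.mono (h : NoDescendingChain S) (hTS : T ⊆ S) : NoDescendingChain T :=
  fun ⟨x, hx, hanti⟩ => h ⟨x, fun n => hTS (hx n), hanti⟩

lemma NonEquidistant.dist_lt_of_le (h : NonEquidistant S) {x y z : E} (hx : x ∈ S)
    (hy : y ∈ S) (hz : z ∈ S) (hxy : x ≠ y) (hyz : y ≠ z) (hle : dist x y ≤ dist x z) :
    dist x y < dist x z := by
  refine hle.lt_of_ne fun hd => h ⟨x, hx, y, hy, x, hx, z, hz, fun hpair => ?_, hd, dist_pos.2 hxy⟩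
  rcases Set.pair_eq_pair_iff.1 hpair with ⟨-, hyz'⟩ | ⟨-, hyx⟩
  exacts [hyz hyz', hxy hyx.symm]

lemma NoDescendingChain.exists_not_dist_lt (h : NoDescendingChain S) {A : Set E}
    (hAS : A ⊆ S) (hA : A.Nonempty) {f : E → E} (hf : Set.MapsTo f A A) :
    ∃ a ∈ A, ¬ dist (f a) (f (f a)) < dist a (f a) := by
  by_contra! hlt
  obtain ⟨a, ha⟩ := hA
  refine h ⟨fun n => f^[n] a, fun n => hAS (hf.iterate n ha),
    strictAnti_nat_of_succ_lt fun n => ?_⟩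
  simpa only [Function.iterate_succ_apply'] using hlt _ (hf.iterate n ha)

end PointSets

namespace StableMatching

variable {E : Type*}

section Matchings

variable (G : SimpleGraph E)

def IsMatchingMap (m : E → Option E) : Prop :=
  ∀ x y, m x = some y → G.Adj x y ∧ m y = some x

def IsStableMatchingMap [PseudoEMetricSpace E] (m : E → Option E) : Prop :=
  ∀ x y, G.Adj x y → ¬ edist x y < min (partnerEDist m x) (partnerEDist m y)

def completeOn (U : Set E) : SimpleGraph E := SimpleGraph.fromRel fun x y => x ∈ U ∧ y ∈ U

def completeBipartiteOn (U V : Set E) : SimpleGraph E := SimpleGraph.fromRel fun x y => x ∈ U ∧ y ∈ V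

variable {G} {U V : Set E} {m : E → Option E}

lemma completeOn_adj {x y : E} : (completeOn U).Adj x y ↔ x ∈ U ∧ y ∈ U ∧ x ≠ y := by
  simp only [completeOn, SimpleGraph.fromRel_adj]
  tauto

lemma completeBipartiteOn_adj {x y : E} :
    (completeBipartiteOn U V).Adj x y ↔ x ≠ y ∧ (x ∈ U ∧ y ∈ V ∨ x ∈ V ∧ y ∈ U) := by
  simp only [completeBipartiteOn, SimpleGraph.fromRel_adj]
  tauto

lemma isPartialMatching_iff : IsPartialMatching U m ↔ IsMatchingMap (completeOn U) m := by
  refine ⟨fun ⟨hout, hin⟩ x y hxy => ?_, fun h => ⟨fun x hx => ?_, fun x _ y hxy => ?_⟩⟩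
  · by_cases hx : x ∈ U
    · obtain ⟨hy, hyx, hyx'⟩ := hin x hx y hxy
      exact ⟨completeOn_adj.2 ⟨hx, hy, hyx.symm⟩, hyx'⟩
    · simp [hout x hx] at hxy
  · cases hxy : m x with
    | none => rfl
    | some y => exact absurd (completeOn_adj.1 (h x y hxy).1).1 hx
  · obtain ⟨hadj, hyx⟩ := h x y hxy
    exact ⟨(completeOn_adj.1 hadj).2.1, hadj.ne.symm, hyx⟩

lemma isBipartiteMatching_iff (hUV : Disjoint U V) :
    IsBipartiteMatching U V m ↔ IsMatchingMap (completeBipartiteOn U V) m := by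
  refine ⟨fun ⟨hout, hU, hV⟩ x y hxy => ?_, fun h => ⟨fun x hx => ?_, fun x hx y hxy => ?_,
    fun x hx y hxy => ?_⟩⟩
  · by_cases hxU : x ∈ U
    · obtain ⟨hy, hyx⟩ := hU x hxU y hxy
      exact ⟨completeBipartiteOn_adj.2 ⟨hUV.ne_of_mem hxU hy, .inl ⟨hxU, hy⟩⟩, hyx⟩
    by_cases hxV : x ∈ V
    · obtain ⟨hy, hyx⟩ := hV x hxV y hxy
      exact ⟨completeBipartiteOn_adj.2 ⟨(hUV.ne_of_mem hy hxV).symm, .inr ⟨hxV, hy⟩⟩, hyx⟩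
    · simp [hout x (by simp [hxU, hxV])] at hxy
  · cases hxy : m x with
    | none => rfl
    | some y =>
      rcases (completeBipartiteOn_adj.1 (h x y hxy).1).2 with ⟨hxU, -⟩ | ⟨hxV, -⟩
      exacts [absurd (.inl hxU) hx, absurd (.inr hxV) hx]
  · obtain ⟨hadj, hyx⟩ := h x y hxy
    rcases (completeBipartiteOn_adj.1 hadj).2 with ⟨-, hy⟩ | ⟨hxV, -⟩
    exacts [⟨hy, hyx⟩, absurd hxV (hUV.notMem_of_mem_left hx)]
  · obtain ⟨hadj, hyx⟩ := h x y hxy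
    rcases (completeBipartiteOn_adj.1 hadj).2 with ⟨hxU, -⟩ | ⟨-, hy⟩
    exacts [absurd hx (hUV.notMem_of_mem_left hxU), ⟨hy, hyx⟩]

lemma isStableMatching_iff [PseudoEMetricSpace E] :
    IsStableMatching U m ↔ IsStableMatchingMap (completeOn U) m := by
  refine ⟨fun h x y hxy => ?_, fun h x hx y hy hxy => h x y (completeOn_adj.2 ⟨hx, hy, hxy⟩)⟩
  obtain ⟨hx, hy, hne⟩ := completeOn_adj.1 hxy
  exact h x hx y hy hne

lemma isBipartiteStable_iff [PseudoEMetricSpace E] (hUV : Disjoint U V) :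
    IsBipartiteStable U V m ↔ IsStableMatchingMap (completeBipartiteOn U V) m := by
  refine ⟨fun h x y hxy => ?_, fun h x hx y hy =>
    h x y (completeBipartiteOn_adj.2 ⟨hUV.ne_of_mem hx hy, .inl ⟨hx, hy⟩⟩)⟩
  rcases (completeBipartiteOn_adj.1 hxy).2 with ⟨hx, hy⟩ | ⟨hx, hy⟩
  · exact h x hx y hy
  · rw [edist_comm, min_comm]
    exact h y hy x hx

lemma subsingleton_of_isIndepSet_completeOn {A : Set E} (h : (completeOn U).IsIndepSet A)
    (hAU : A ⊆ U) : A.Subsingleton :=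
  fun _ hx _ hy => by_contra fun hxy => h hx hy hxy (completeOn_adj.2 ⟨hAU hx, hAU hy, hxy⟩)

lemma subset_or_subset_of_isIndepSet_completeBipartiteOn {A : Set E}
    (h : (completeBipartiteOn U V).IsIndepSet A) (hA : A ⊆ U ∪ V) : A ⊆ U ∨ A ⊆ V := by
  by_contra! hc
  obtain ⟨x, hxA, hxU⟩ := Set.not_subset.1 hc.1
  obtain ⟨y, hyA, hyV⟩ := Set.not_subset.1 hc.2
  have hxV : x ∈ V := (hA hxA).resolve_left hxU
  have hyU : y ∈ U := (hA hyA).resolve_right hyV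
  have hxy : x ≠ y := fun h => hxU (h ▸ hyU)
  exact h hxA hyA hxy (completeBipartiteOn_adj.2 ⟨hxy, .inr ⟨hxV, hyU⟩⟩)

end Matchings

variable [MetricSpace E] (G : SimpleGraph E)

def IsNearestIn (T : Set E) (x y : E) : Prop :=
  y ∈ T ∧ G.Adj x y ∧ ∀ z ∈ T, G.Adj x z → dist x y ≤ dist x z

def IsMutualNearest (T : Set E) (x y : E) : Prop :=
  IsNearestIn G T x y ∧ IsNearestIn G T y x

variable {G} {S T : Set E} {x y : E}

lemma IsMutualNearest.symm (h : IsMutualNearest G T x y) : IsMutualNearest G T y x :=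
  ⟨h.2, h.1⟩

lemma IsNearestIn.unique (hneq : NonEquidistant T) (hx : x ∈ T) {y' : E}
    (h : IsNearestIn G T x y) (h' : IsNearestIn G T x y') : y = y' := by
  by_contra hne
  exact (hneq.dist_lt_of_le hx h.1 h'.1 h.2.1.ne hne (h.2.2 _ h'.1 h'.2.1)).not_ge
    (h'.2.2 _ h.1 h.2.1)

lemma IsNearestIn.of_subset {T' : Set E} (h : IsNearestIn G T x y) (hy : y ∈ T')
    (hT' : T' ∩ ball x (dist x y) ⊆ T) : IsNearestIn G T' x y := by
  refine ⟨hy, h.2.1, fun z hz hxz => le_of_not_gt fun hlt => ?_⟩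
  exact hlt.not_ge (h.2.2 z (hT' ⟨hz, by rwa [mem_ball, dist_comm]⟩) hxz)

lemma exists_isNearestIn (hT : DiscreteSet T) (h : ∃ y ∈ T, G.Adj x y) :
    ∃ y, IsNearestIn G T x y := by
  obtain ⟨y₀, hy₀, hxy₀⟩ := h
  let F := {z ∈ T | G.Adj x z ∧ dist x z ≤ dist x y₀}
  have hF : F.Finite := (hT x (dist x y₀ + 1)).subset fun z hz =>
    ⟨hz.1, by rw [mem_ball, dist_comm]; linarith [hz.2.2]⟩
  obtain ⟨y, ⟨hy, hxy, hyy₀⟩, hmin⟩ := Set.exists_min_image F (dist x) hF ⟨y₀, hy₀, hxy₀, le_rfl⟩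
  exact ⟨y, hy, hxy, fun z hz hxz => (le_total (dist x z) (dist x y₀)).elim
    (fun hz₀ => hmin z ⟨hz, hxz, hz₀⟩) hyy₀.trans⟩

theorem exists_isMutualNearest (hdisc : DiscreteSet T) (hneq : NonEquidistant T)
    (hndc : NoDescendingChain T) (h : ∃ x ∈ T, ∃ y ∈ T, G.Adj x y) :
    ∃ x y, IsMutualNearest G T x y := by
  by_contra! hno
  let A := {x ∈ T | ∃ y ∈ T, G.Adj x y}
  choose! f hf using fun x (hx : x ∈ A) => exists_isNearestIn hdisc hx.2
  have hmaps : Set.MapsTo f A A := fun x hx => ⟨(hf x hx).1, x, hx.1, (hf x hx).2.1.symm⟩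
  obtain ⟨x₀, hx₀, y₀, hy₀, hxy₀⟩ := h
  obtain ⟨a, ha, hnot⟩ := hndc.exists_not_dist_lt (Set.sep_subset _ _) ⟨x₀, hx₀, y₀, hy₀, hxy₀⟩ hmaps
  have hab := hf a ha
  have hbc := hf (f a) (hmaps ha)
  -- `f (f a)` is at most as far from `f a` as `a` is, so by `hnot` it is `a`
  have hca : f (f a) = a := by
    by_contra hca
    refine hnot ((hneq.dist_lt_of_le hab.1 hbc.1 ha.1 hbc.2.1.ne hca ?_).trans_eq (dist_comm _ _))
    exact hbc.2.2 a ha.1 hab.2.1.symm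
  rw [hca] at hbc
  exact hno a (f a) ⟨hab, hbc⟩

def greedyStage (G : SimpleGraph E) (S : Set E) : ℕ → Set E
  | 0 => S
  | n + 1 => {x ∈ greedyStage G S n | ∀ y, ¬ IsMutualNearest G (greedyStage G S n) x y}

def greedyRemnant (G : SimpleGraph E) (S : Set E) : Set E := ⋂ n, greedyStage G S n

open Classical in
noncomputable def greedyMatching (G : SimpleGraph E) (S : Set E) (x : E) : Option E :=
  if h : ∃ y n, IsMutualNearest G (greedyStage G S n) x y then some h.choose else none

lemma greedyStage_antitone : Antitone (greedyStage G S) :=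
  antitone_nat_of_succ_le fun _ _ hx => hx.1

lemma mem_greedyStage_iff {n : ℕ} :
    x ∈ greedyStage G S n ↔ x ∈ S ∧ ∀ k < n, ∀ y, ¬ IsMutualNearest G (greedyStage G S k) x y := by
  induction n with
  | zero => simp [greedyStage]
  | succ n ih =>
    rw [Nat.forall_lt_succ_right, ← and_assoc, ← ih]
    rfl

lemma greedyStage_subset {n : ℕ} : greedyStage G S n ⊆ S :=
  fun _ hx => (mem_greedyStage_iff.1 hx).1

lemma IsMutualNearest.notMem_greedyStage {n k : ℕ}
    (h : IsMutualNearest G (greedyStage G S n) x y) (hnk : n < k) : x ∉ greedyStage G S k :=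
  fun hx => (greedyStage_antitone hnk hx).2 y h

lemma IsMutualNearest.greedyStage_unique (hneq : NonEquidistant S) {n n' : ℕ} {y' : E}
    (h : IsMutualNearest G (greedyStage G S n) x y)
    (h' : IsMutualNearest G (greedyStage G S n') x y') : y = y' := by
  rcases lt_trichotomy n n' with hlt | rfl | hlt
  · exact absurd h'.2.1 (h.notMem_greedyStage hlt)
  · exact h.1.unique (hneq.mono greedyStage_subset) h.2.1 h'.1
  · exact absurd h.2.1 (h'.notMem_greedyStage hlt)

lemma greedyMatching_eq_some_iff (hneq : NonEquidistant S) :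
    greedyMatching G S x = some y ↔ ∃ n, IsMutualNearest G (greedyStage G S n) x y := by
  unfold greedyMatching
  split_ifs with h
  · obtain ⟨n, hn⟩ := h.choose_spec
    exact ⟨fun hy => ⟨n, Option.some.inj hy ▸ hn⟩,
      fun ⟨n', hn'⟩ => congrArg some (hn.greedyStage_unique hneq hn')⟩
  · exact ⟨fun hy => by simp at hy, fun ⟨n, hn⟩ => absurd ⟨y, n, hn⟩ h⟩

lemma greedyMatching_eq_none_iff :
    greedyMatching G S x = none ↔ ∀ n y, ¬ IsMutualNearest G (greedyStage G S n) x y := by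
  unfold greedyMatching
  split_ifs with h
  · obtain ⟨y, n, hn⟩ := h
    simpa using ⟨n, y, hn⟩
  · simp only [not_exists] at h
    simpa using fun n y => h y n

lemma mem_greedyRemnant_iff : x ∈ greedyRemnant G S ↔ x ∈ S ∧ greedyMatching G S x = none := by
  simp only [greedyRemnant, Set.mem_iInter, mem_greedyStage_iff, greedyMatching_eq_none_iff]
  exact ⟨fun h => ⟨(h 0).1, fun n y => (h (n + 1)).2 n n.lt_succ_self y⟩,
    fun h n => ⟨h.1, fun k _ => h.2 k⟩⟩

lemma isMatchingMap_greedyMatching (hneq : NonEquidistant S) :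
    IsMatchingMap G (greedyMatching G S) := by
  intro x y hxy
  obtain ⟨n, hn⟩ := (greedyMatching_eq_some_iff hneq).1 hxy
  exact ⟨hn.1.2.1, (greedyMatching_eq_some_iff hneq).2 ⟨n, hn.symm⟩⟩

theorem isIndepSet_greedyRemnant (hdisc : DiscreteSet S) (hneq : NonEquidistant S)
    (hndc : NoDescendingChain S) : G.IsIndepSet (greedyRemnant G S) := by
  intro a ha b hb _ hab
  have hRS : greedyRemnant G S ⊆ S := fun _ hx => greedyStage_subset (Set.mem_iInter.1 hx 0)
  obtain ⟨x, y, hxy⟩ := exists_isMutualNearest (hdisc.mono hRS) (hneq.mono hRS) (hndc.mono hRS)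
    ⟨a, ha, b, hb, hab⟩
  let F := (S ∩ ball x (2 * dist x y)) \ greedyRemnant G S
  have hF : ∀ᶠ n in atTop, ∀ z ∈ F, z ∉ greedyStage G S n := by
    refine (hdisc x _).sdiff.eventually_all.2 fun z hz => ?_
    obtain ⟨n, hn⟩ := not_forall.1 (Set.mem_iInter.not.1 hz.2)
    exact eventually_atTop.2 ⟨n, fun k hk hzk => hn (greedyStage_antitone hk hzk)⟩
  obtain ⟨N, hN⟩ := hF.exists
  have hnear : ∀ z ∈ ball x (2 * dist x y), z ∈ greedyStage G S N → z ∈ greedyRemnant G S :=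
    fun z hz hzN => by_contra fun hzR => hN z ⟨⟨greedyStage_subset hzN, hz⟩, hzR⟩ hzN
  have hmut : IsMutualNearest G (greedyStage G S N) x y := by
    refine ⟨hxy.1.of_subset (Set.mem_iInter.1 hxy.1.1 N) fun z ⟨hzN, hz⟩ => hnear z ?_ hzN,
      hxy.2.of_subset (Set.mem_iInter.1 hxy.2.1 N) fun z ⟨hzN, hz⟩ => hnear z ?_ hzN⟩
    · exact ball_subset_ball (by linarith [dist_nonneg (x := x) (y := y)]) hz
    · refine mem_ball.2 ((dist_triangle_right z x y).trans_lt ?_)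
      rw [dist_comm] at hz
      linarith [mem_ball.1 hz]
  exact hmut.notMem_greedyStage N.lt_succ_self (Set.mem_iInter.1 hxy.2.1 (N + 1))

lemma partnerEDist_greedyMatching_le (hneq : NonEquidistant S) {n : ℕ} {z : E}
    (h : IsMutualNearest G (greedyStage G S n) x z) (hy : y ∈ greedyStage G S n)
    (hxy : G.Adj x y) : partnerEDist (greedyMatching G S) x ≤ edist x y :=
  partnerEDist_le_edist ((greedyMatching_eq_some_iff hneq).2 ⟨n, h⟩) (h.1.2.2 y hy hxy)

theorem isStableMatchingMap_greedyMatching (hS : ∀ ⦃x y⦄, G.Adj x y → x ∈ S)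
    (hdisc : DiscreteSet S) (hneq : NonEquidistant S) (hndc : NoDescendingChain S) :
    IsStableMatchingMap G (greedyMatching G S) := by
  classical
  intro x y hxy hblock
  by_cases h : ∃ n, (∃ z, IsMutualNearest G (greedyStage G S n) x z) ∨
      ∃ z, IsMutualNearest G (greedyStage G S n) y z
  · have hx : x ∈ greedyStage G S (Nat.find h) :=
      mem_greedyStage_iff.2 ⟨hS hxy, fun k hk z hz => Nat.find_min h hk (.inl ⟨z, hz⟩)⟩
    have hy : y ∈ greedyStage G S (Nat.find h) :=
      mem_greedyStage_iff.2 ⟨hS hxy.symm, fun k hk z hz => Nat.find_min h hk (.inr ⟨z, hz⟩)⟩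
    rcases Nat.find_spec h with ⟨z, hz⟩ | ⟨z, hz⟩
    · exact hblock.not_ge ((min_le_left _ _).trans (partnerEDist_greedyMatching_le hneq hz hy hxy))
    · refine hblock.not_ge ((min_le_right _ _).trans ?_)
      rw [edist_comm]
      exact partnerEDist_greedyMatching_le hneq hz hx hxy.symm
  · simp only [not_exists, not_or] at h
    have hx := mem_greedyRemnant_iff.2 ⟨hS hxy, greedyMatching_eq_none_iff.2 fun n z => (h n).1 z⟩
    have hy := mem_greedyRemnant_iff.2
      ⟨hS hxy.symm, greedyMatching_eq_none_iff.2 fun n z => (h n).2 z⟩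
    exact isIndepSet_greedyRemnant hdisc hneq hndc hx hy hxy.ne hxy

variable {m : E → Option E}

lemma IsStableMatchingMap.eq_some_of_isMutualNearest (hS : ∀ ⦃x y⦄, G.Adj x y → x ∈ S)
    (hneq : NonEquidistant S) (hm : IsMatchingMap G m) (hs : IsStableMatchingMap G m) (n : ℕ) :
    ∀ {x y}, IsMutualNearest G (greedyStage G S n) x y → m x = some y := by
  induction n using Nat.strong_induction_on with
  | _ n ih =>
  have hpref : ∀ {a b}, IsMutualNearest G (greedyStage G S n) a b → m a ≠ some b →
      edist a b < partnerEDist m a := by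
    intro a b hab hne
    refine edist_lt_partnerEDist fun c hac => ?_
    obtain ⟨hadj, hca⟩ := hm a c hac
    -- had `c` been removed before stage `n`, its partner there would be `m c = a`
    have hc : c ∈ greedyStage G S n := mem_greedyStage_iff.2 ⟨hS hadj.symm, fun k hk w hcw => by
      obtain rfl : w = a := Option.some.inj ((ih k hk hcw).symm.trans hca)
      exact hcw.symm.notMem_greedyStage hk hab.2.1⟩
    refine (hneq.mono greedyStage_subset).dist_lt_of_le hab.2.1 hab.1.1 hc hab.1.2.1.ne
      (fun hbc => hne ?_) (hab.1.2.2 c hc hadj)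
    rw [hbc, hac]
  intro x y hxy
  by_contra hne
  have hyx : m y ≠ some x := fun hyx => hne (hm y x hyx).2
  refine hs x y hxy.1.2.1 (lt_min (hpref hxy hne) ?_)
  rw [edist_comm]
  exact hpref hxy.symm hyx

theorem IsStableMatchingMap.eq_greedyMatching (hS : ∀ ⦃x y⦄, G.Adj x y → x ∈ S)
    (hdisc : DiscreteSet S) (hneq : NonEquidistant S) (hndc : NoDescendingChain S)
    (hm : IsMatchingMap G m) (hs : IsStableMatchingMap G m) : m = greedyMatching G S := by
  have hgreedy : ∀ {x y}, greedyMatching G S x = some y → m x = some y := fun hxy =>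
    let ⟨n, hn⟩ := (greedyMatching_eq_some_iff hneq).1 hxy
    hs.eq_some_of_isMutualNearest hS hneq hm n hn
  funext x
  cases hx : greedyMatching G S x with
  | some y => exact hgreedy hx
  | none =>
    cases hmx : m x with
    | none => rfl
    | some z =>
      obtain ⟨hxz, hzx⟩ := hm x z hmx
      have hz : greedyMatching G S z = none := by
        cases hgz : greedyMatching G S z with
        | none => rfl
        | some w =>
          obtain rfl : w = x := Option.some.inj ((hgreedy hgz).symm.trans hzx)
          exact absurd ((isMatchingMap_greedyMatching hneq z w hgz).2.symm.trans hx)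
            (Option.some_ne_none z)
      exact (isIndepSet_greedyRemnant hdisc hneq hndc (mem_greedyRemnant_iff.2 ⟨hS hxz, hx⟩)
        (mem_greedyRemnant_iff.2 ⟨hS hxz.symm, hz⟩) hxz.ne hxz).elim

theorem exists_unique_stableMatchingMap (hS : ∀ ⦃x y⦄, G.Adj x y → x ∈ S)
    (hdisc : DiscreteSet S) (hneq : NonEquidistant S) (hndc : NoDescendingChain S) :
    ∃ m, IsMatchingMap G m ∧ IsStableMatchingMap G m ∧ G.IsIndepSet {x ∈ S | m x = none} ∧
      ∀ m', IsMatchingMap G m' → IsStableMatchingMap G m' → m' = m :=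
  ⟨greedyMatching G S, isMatchingMap_greedyMatching hneq,
    isStableMatchingMap_greedyMatching hS hdisc hneq hndc,
    (isIndepSet_greedyRemnant hdisc hneq hndc).mono fun _ hx => mem_greedyRemnant_iff.2 hx,
    fun _ hm hs => hs.eq_greedyMatching hS hdisc hneq hndc hm⟩

end StableMatching

open StableMatching

/-- Existence and uniqueness of the stable partial matching, in both the one-color
and the two-color (bipartite) settings, together with the structure of the set of
unmatched points. -/
theorem stable_matching_exists_unique (d : ℕ) :
    (∀ U : Set (EuclideanSpace ℝ (Fin d)),
      DiscreteSet U → NonEquidistant U → NoDescendingChain U →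
      ∃ m : EuclideanSpace ℝ (Fin d) → Option (EuclideanSpace ℝ (Fin d)),
        IsPartialMatching U m ∧ IsStableMatching U m ∧
        {x | x ∈ U ∧ m x = none}.Subsingleton ∧
        ∀ m', IsPartialMatching U m' → IsStableMatching U m' →
          ∀ x ∈ U, m' x = m x) ∧
    (∀ U V : Set (EuclideanSpace ℝ (Fin d)), Disjoint U V →
      DiscreteSet (U ∪ V) → NonEquidistant (U ∪ V) → NoDescendingChain (U ∪ V) →
      ∃ m : EuclideanSpace ℝ (Fin d) → Option (EuclideanSpace ℝ (Fin d)),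
        IsBipartiteMatching U V m ∧ IsBipartiteStable U V m ∧
        ({x | x ∈ U ∪ V ∧ m x = none} ⊆ U ∨ {x | x ∈ U ∪ V ∧ m x = none} ⊆ V) ∧
        ∀ m', IsBipartiteMatching U V m' → IsBipartiteStable U V m' →
          ∀ x ∈ U ∪ V, m' x = m x) := by
  constructor
  · intro U hdisc hneq hndc
    obtain ⟨m, hm, hs, hfree, huniq⟩ := exists_unique_stableMatchingMap (G := completeOn U)
      (fun _ _ h => (completeOn_adj.1 h).1) hdisc hneq hndc
    refine ⟨m, isPartialMatching_iff.2 hm, isStableMatching_iff.2 hs,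
      subsingleton_of_isIndepSet_completeOn hfree (Set.sep_subset _ _), fun m' hm' hs' x _ => ?_⟩
    rw [huniq m' (isPartialMatching_iff.1 hm') (isStableMatching_iff.1 hs')]
  · intro U V hUV hdisc hneq hndc
    obtain ⟨m, hm, hs, hfree, huniq⟩ := exists_unique_stableMatchingMap
      (G := completeBipartiteOn U V)
      (fun _ _ h => (completeBipartiteOn_adj.1 h).2.imp And.left And.left) hdisc hneq hndc
    refine ⟨m, (isBipartiteMatching_iff hUV).2 hm, (isBipartiteStable_iff hUV).2 hs,
      subset_or_subset_of_isIndepSet_completeBipartiteOn hfree (Set.sep_subset _ _),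
      fun m' hm' hs' x _ => ?_⟩
    rw [huniq m' ((isBipartiteMatching_iff hUV).1 hm') ((isBipartiteStable_iff hUV).1 hs')]
end

section
/- Let U be a countable set equipped with a locally finite forest structure in which every tree has exactly one end (each vertex has a unique parent on its infinite path, finitely many children, and a total order on children). Then the iterative twig-matching construction—matching ordered children of twigs in consecutive pairs, matching the last odd child to the twig, removing matched vertices, and repeating—produces a perfect matching of U in which every matched pair is at graph distance at most 2 in the original forest. -/
/-! Following each vertex's ray one step gives a parent map `par`; uniqueness of rays makes it
aperiodic and, by König's lemma and local finiteness, every vertex has finitely many descendants.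
The subtree sizes satisfy `s v = 1 + ∑ s c` over the children `c` of `v`, so `v` has an odd number
of odd-size children exactly when `s v` is even. Hence the star at `v` (its odd-size children,
together with `v` itself when `s v` is even) has even size. These stars partition the vertices,
an odd-size vertex lying in its parent's star and an even-size one in its own, and pairing off
each star arbitrarily matches siblings or a parent with a child. -/

open Function

theorem Finite.exists_involutive_ne_of_even_card {α : Type*} [Finite α]
    (h : Even (Nat.card α)) : ∃ f : α → α, Involutive f ∧ ∀ a, f a ≠ a := by
  obtain ⟨k, hk⟩ := h
  let e : α ≃ Fin 2 × Fin k :=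
    (Finite.equivFinOfCardEq (by omega : Nat.card α = 2 * k)).trans finProdFinEquiv.symm
  have hrev : ∀ i : Fin 2, i.rev ≠ i := by decide
  refine ⟨fun a => e.symm ((e a).1.rev, (e a).2), fun a => by simp, fun a ha => ?_⟩
  apply hrev (e a).1
  simpa using congrArg (fun b => (e b).1) ha

theorem exists_involutive_ne_of_even_fibers {α ι : Type*} (g : α → ι)
    (hfin : ∀ i, (g ⁻¹' {i}).Finite) (heven : ∀ i, Even (g ⁻¹' {i}).ncard) :
    ∃ f : α → α, Involutive f ∧ (∀ a, f a ≠ a) ∧ ∀ a, g (f a) = g a := by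
  have hfiber (i : ι) : ∃ σ : {a // g a = i} → {a // g a = i}, Involutive σ ∧ ∀ a, σ a ≠ a :=
    have : Finite {a // g a = i} := (hfin i).to_subtype
    Finite.exists_involutive_ne_of_even_card (heven i)
  choose σ hσ hσne using hfiber
  set f : α → α := fun a => (σ (g a) ⟨a, rfl⟩).1
  have hf (i : ι) (x : {a // g a = i}) : f x = σ i x := by
    obtain ⟨a, rfl⟩ := x
    rfl
  have hgf (a : α) : g (f a) = g a := (σ (g a) ⟨a, rfl⟩).2
  refine ⟨f, fun a => ?_, fun a ha => hσne _ ⟨a, rfl⟩ (Subtype.ext ha), hgf⟩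
  rw [hf (g a) ⟨f a, hgf a⟩]
  exact congrArg Subtype.val (hσ (g a) ⟨a, rfl⟩)

namespace Function

variable {U : Type*} (par : U → U)

def descendants (v : U) : Set U := {u | ∃ n, par^[n] u = v}

noncomputable def subtreeSize (v : U) : ℕ := (descendants par v).ncard

variable {par}

theorem mem_descendants_of_parent_eq {c v : U} (h : par c = v) : c ∈ descendants par v := ⟨1, h⟩

theorem descendants_eq_insert_biUnion (v : U) :
    descendants par v = insert v (⋃ c ∈ par ⁻¹' {v}, descendants par c) := by
  ext u
  simp only [descendants, Set.mem_ofPred_eq, Set.mem_insert_iff, Set.mem_iUnion,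
    Set.mem_preimage, Set.mem_singleton_iff, exists_prop]
  constructor
  · rintro ⟨_ | n, hn⟩
    · exact .inl hn
    · exact .inr ⟨par^[n] u, by rwa [← iterate_succ_apply' par], n, rfl⟩
  · rintro (rfl | ⟨c, rfl, n, rfl⟩)
    · exact ⟨0, rfl⟩
    · exact ⟨n + 1, iterate_succ_apply' par n u⟩

theorem exists_seq_of_infinite_descendants (hchild : ∀ v, (par ⁻¹' {v}).Finite) {v : U}
    (hv : (descendants par v).Infinite) : ∃ f : ℕ → U, f 0 = v ∧ ∀ n, par (f (n + 1)) = f n := by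
  have step (w : {w // (descendants par w).Infinite}) :
      ∃ c : {w // (descendants par w).Infinite}, par c = w := by
    by_contra! hfin
    refine w.2 ?_
    rw [descendants_eq_insert_biUnion]
    exact ((hchild w).biUnion fun c hc => Set.not_infinite.1 fun hinf => hfin ⟨c, hinf⟩ hc).insert _
  choose next hnext using step
  refine ⟨fun n => (next^[n] ⟨v, hv⟩).1, rfl, fun n => ?_⟩
  simp only [iterate_succ_apply']
  exact hnext _

theorem iterate_of_parent_seq {f : ℕ → U} (hf : ∀ n, par (f (n + 1)) = f n) (n k : ℕ) :
    par^[k] (f (n + k)) = f n := by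
  induction k with
  | zero => rfl
  | succ k ih => rw [iterate_succ_apply, ← Nat.add_assoc, hf, ih]

theorem injective_iterate_of_aperiodic (haper : ∀ v n, par^[n + 1] v ≠ v) (v : U) :
    Injective (fun n => par^[n] v) := by
  refine Injective.of_lt_imp_ne fun a b hab heq => ?_
  obtain ⟨k, rfl⟩ := Nat.exists_eq_add_of_lt hab
  apply haper (par^[a] v) k
  rw [← iterate_add_apply, Nat.add_comm, ← Nat.add_assoc, heq]

theorem injective_of_parent_seq (haper : ∀ v n, par^[n + 1] v ≠ v) {f : ℕ → U}
    (hf : ∀ n, par (f (n + 1)) = f n) : Injective f := by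
  refine Injective.of_lt_imp_ne fun a b hab heq => ?_
  obtain ⟨k, rfl⟩ := Nat.exists_eq_add_of_lt hab
  apply haper (f a) k
  conv_rhs => rw [← iterate_of_parent_seq hf a (k + 1)]
  rw [← Nat.add_assoc, heq]

theorem notMem_descendants_of_parent_eq (haper : ∀ v n, par^[n + 1] v ≠ v) {c v : U}
    (h : par c = v) : v ∉ descendants par c := by
  rintro ⟨n, hn⟩
  exact haper v n (by rw [iterate_succ_apply', hn, h])

theorem pairwiseDisjoint_descendants (haper : ∀ v n, par^[n + 1] v ≠ v) (v : U) :
    (par ⁻¹' {v}).PairwiseDisjoint (descendants par) := by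
  intro c (hc : par c = v) c' (hc' : par c' = v) hne
  refine Set.disjoint_left.2 fun u ⟨n, hn⟩ ⟨m, hm⟩ => hne ?_
  have hnm : par^[n + 1] u = par^[m + 1] u := by
    rw [iterate_succ_apply', iterate_succ_apply', hn, hm, hc, hc']
  obtain rfl : n = m := Nat.succ_injective (injective_iterate_of_aperiodic haper u hnm)
  exact hn.symm.trans hm

theorem even_subtreeSize_iff (haper : ∀ v n, par^[n + 1] v ≠ v)
    (hdesc : ∀ v, (descendants par v).Finite) (v : U) :
    Even (subtreeSize par v) ↔ Odd {c | par c = v ∧ Odd (subtreeSize par c)}.ncard := by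
  have hchild : (par ⁻¹' {v}).Finite :=
    (hdesc v).subset fun c hc => mem_descendants_of_parent_eq hc
  have hsize : subtreeSize par v = ∑ c ∈ hchild.toFinset, subtreeSize par c + 1 := by
    rw [subtreeSize, descendants_eq_insert_biUnion, Set.ncard_insert_of_notMem _
      (hchild.biUnion fun c _ => hdesc c), hchild.ncard_biUnion (fun c _ => hdesc c)
      (pairwiseDisjoint_descendants haper v), finsum_mem_eq_finite_toFinset_sum _ hchild]
    · rfl
    · simp only [Set.mem_iUnion]
      rintro ⟨c, hc, hvc⟩
      exact notMem_descendants_of_parent_eq haper hc hvc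
  have hodd : {c | par c = v ∧ Odd (subtreeSize par c)} =
      ↑{c ∈ hchild.toFinset | Odd (subtreeSize par c)} := by
    ext c
    simp
  rw [hsize, Nat.even_add_one, Finset.even_sum_iff_even_card_odd, hodd, Set.ncard_coe_finset,
    Nat.not_even_iff_odd]

variable (par) in
noncomputable def pairingCenter (u : U) : U := if Odd (subtreeSize par u) then par u else u

theorem preimage_pairingCenter (v : U) :
    pairingCenter par ⁻¹' {v} =
      {c | par c = v ∧ Odd (subtreeSize par c)} ∪ {u | u = v ∧ Even (subtreeSize par u)} := by
  ext u
  simp only [pairingCenter, Set.mem_preimage, Set.mem_singleton_iff, Set.mem_union,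
    Set.mem_ofPred_eq, ← Nat.not_odd_iff_even]
  split_ifs <;> tauto

theorem finite_preimage_pairingCenter (hdesc : ∀ v, (descendants par v).Finite) (v : U) :
    (pairingCenter par ⁻¹' {v}).Finite := by
  rw [preimage_pairingCenter]
  exact ((hdesc v).subset fun c hc => mem_descendants_of_parent_eq hc.1).union
    ((Set.finite_singleton v).subset fun u hu => hu.1)

theorem even_ncard_preimage_pairingCenter (haper : ∀ v n, par^[n + 1] v ≠ v)
    (hdesc : ∀ v, (descendants par v).Finite) (v : U) :
    Even (pairingCenter par ⁻¹' {v}).ncard := by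
  have hchild : {c | par c = v ∧ Odd (subtreeSize par c)}.Finite :=
    (hdesc v).subset fun c hc => mem_descendants_of_parent_eq hc.1
  rw [preimage_pairingCenter, Set.ncard_union_eq ?disj hchild ((Set.finite_singleton v).subset
    fun u hu => hu.1)]
  case disj =>
    exact Set.disjoint_left.2 fun u hu hu' => Nat.not_even_iff_odd.2 hu.2 (hu'.1 ▸ hu'.2)
  by_cases hv : Even (subtreeSize par v)
  · have hself : {u | u = v ∧ Even (subtreeSize par u)} = {v} := by
      ext u
      simp only [Set.mem_ofPred_eq, Set.mem_singleton_iff, and_iff_left_iff_imp]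
      rintro rfl
      exact hv
    rw [hself, Set.ncard_singleton, Nat.even_add_one, Nat.not_even_iff_odd]
    exact (even_subtreeSize_iff haper hdesc v).1 hv
  · have hself : {u | u = v ∧ Even (subtreeSize par u)} = ∅ := by
      ext u
      simp only [Set.mem_ofPred_eq, Set.mem_empty_iff_false, iff_false, not_and]
      rintro rfl
      exact hv
    rw [hself, Set.ncard_empty, Nat.add_zero, ← Nat.not_odd_iff_even]
    exact mt (even_subtreeSize_iff haper hdesc v).2 hv

theorem exists_involutive_ne_parent_or_sibling (haper : ∀ v n, par^[n + 1] v ≠ v)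
    (hdesc : ∀ v, (descendants par v).Finite) :
    ∃ M : U → U, Involutive M ∧ (∀ u, M u ≠ u) ∧
      ∀ u, M u = par u ∨ par (M u) = u ∨ par (M u) = par u := by
  obtain ⟨M, hinv, hne, hcenter⟩ := exists_involutive_ne_of_even_fibers (pairingCenter par)
    (finite_preimage_pairingCenter hdesc) (even_ncard_preimage_pairingCenter haper hdesc)
  have hstar (x : U) : x = pairingCenter par x ∨ par x = pairingCenter par x := by
    unfold pairingCenter
    split_ifs <;> simp
  refine ⟨M, hinv, hne, fun u => ?_⟩
  rcases hstar u with hu | hu <;> rcases hstar (M u) with hMu | hMu <;> rw [hcenter] at hMu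
  · exact absurd (hMu.trans hu.symm) (hne u)
  · exact .inr (.inl (hMu.trans hu.symm))
  · exact .inl (hMu.trans hu.symm)
  · exact .inr (.inr (hMu.trans hu.symm))

end Function

namespace SimpleGraph

variable {U : Type*} {G : SimpleGraph U}

def IsRay (G : SimpleGraph U) (p : ℕ → U) : Prop := (∀ n, G.Adj (p n) (p (n + 1))) ∧ Injective p

theorem exists_parent_of_existsUnique_ray (h : ∀ v, ∃! p : ℕ → U, p 0 = v ∧ G.IsRay p) :
    ∃ par : U → U, (∀ v, G.Adj v (par v)) ∧ (∀ v n, par^[n + 1] v ≠ v) ∧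
      ∀ v p, p 0 = v → G.IsRay p → p 1 = par v := by
  choose ray hray hunique using h
  have hshift (v : U) (n : ℕ) : ray v (n + 1) = ray (ray v 1) n :=
    congrFun (hunique _ (fun n => ray v (n + 1))
      ⟨rfl, fun n => (hray v).2.1 (n + 1), (hray v).2.2.comp Nat.succ_injective⟩) n
  have hiter (n : ℕ) : ∀ v, ray v n = (fun w => ray w 1)^[n] v := by
    induction n with
    | zero => exact fun v => (hray v).1
    | succ n ih => exact fun v => by rw [iterate_succ_apply, ← ih, hshift]
  have hadj (v : U) : G.Adj v (ray v 1) := by simpa only [(hray v).1] using (hray v).2.1 0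
  refine ⟨fun v => ray v 1, hadj, fun v n hn => ?_,
    fun v p hp0 hp => congrFun (hunique v p ⟨hp0, hp⟩) 1⟩
  refine Nat.succ_ne_zero n ((hray v).2.2 ?_)
  rw [hiter, hn, (hray v).1]

theorem finite_descendants_of_ray (hlf : ∀ v, (G.neighborSet v).Finite) {par : U → U}
    (hadj : ∀ v, G.Adj v (par v)) (haper : ∀ v n, par^[n + 1] v ≠ v)
    (hray : ∀ v p, p 0 = v → G.IsRay p → p 1 = par v) (v : U) :
    (descendants par v).Finite := by
  by_contra hinf
  have hchild (w : U) : (par ⁻¹' {w}).Finite :=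
    (hlf w).subset fun c (hc : par c = w) => (hc ▸ hadj c).symm
  obtain ⟨f, hf0, hf⟩ := exists_seq_of_infinite_descendants hchild hinf
  have hf1 : f 1 = par v :=
    hray v f hf0 ⟨fun n => hf n ▸ (hadj (f (n + 1))).symm, injective_of_parent_seq haper hf⟩
  exact haper v 1 (by rw [iterate_succ_apply', iterate_one, ← hf1, hf 0, hf0])

theorem reachable_and_dist_le_two {par : U → U} (hadj : ∀ v, G.Adj v (par v)) {u v : U}
    (h : v = par u ∨ par v = u ∨ par v = par u) : G.Reachable u v ∧ G.dist u v ≤ 2 := by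
  have of_adj {u v : U} (huv : G.Adj u v) : G.Reachable u v ∧ G.dist u v ≤ 2 :=
    ⟨huv.reachable, (dist_eq_one_iff_adj.2 huv).le.trans one_le_two⟩
  rcases h with rfl | rfl | hsib
  · exact of_adj (hadj u)
  · exact of_adj (hadj v).symm
  · let p : G.Walk u v := .cons (hadj u) (.cons (hsib ▸ (hadj v).symm) .nil)
    exact ⟨p.reachable, dist_le p⟩

end SimpleGraph

theorem forest_matching_general (U : Type*)
    (G : SimpleGraph U)
    (hlf : ∀ v : U, (G.neighborSet v).Finite)
    (honeend : ∀ v : U, ∃! p : ℕ → U,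
      p 0 = v ∧ (∀ n, G.Adj (p n) (p (n + 1))) ∧ Function.Injective p) :
    ∃ M : U → U, Function.Involutive M ∧ (∀ v, M v ≠ v) ∧
      ∀ v, G.Reachable v (M v) ∧ G.dist v (M v) ≤ 2 := by
  obtain ⟨par, hadj, haper, hray⟩ := SimpleGraph.exists_parent_of_existsUnique_ray honeend
  obtain ⟨M, hinv, hne, hM⟩ := exists_involutive_ne_parent_or_sibling haper
    (SimpleGraph.finite_descendants_of_ray hlf hadj haper hray)
  exact ⟨M, hinv, hne, fun v => SimpleGraph.reachable_and_dist_le_two hadj (hM v)⟩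

/-- Matching from a one-ended locally finite forest: a countable set carrying an
acyclic graph with finite degrees, in which every vertex has exactly one
singly-infinite self-avoiding path, admits a perfect matching in which every
matched pair is at graph distance at most 2. -/
theorem forest_matching (U : Type*) [Countable U] [Nonempty U]
    (G : SimpleGraph U)
    (hlf : ∀ v : U, (G.neighborSet v).Finite)
    (hacyclic : G.IsAcyclic)
    (honeend : ∀ v : U, ∃! p : ℕ → U,
      p 0 = v ∧ (∀ n, G.Adj (p n) (p (n + 1))) ∧ Function.Injective p) :
    ∃ M : U → U, Function.Involutive M ∧ (∀ v, M v ≠ v) ∧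
      ∀ v, G.Reachable v (M v) ∧ G.dist v (M v) ≤ 2 :=
  forest_matching_general U G hlf honeend
end

section
/- Let g : (0,∞) → R be supported on [0,2], continuous and monotone increasing on [0,2] with exactly one sign change at t_0 ∈ (0,2) (g < 0 on (0,t_0), g > 0 on (t_0,2)), and let s ∈ (0,1) satisfy ∫_0^∞ g(t)·t^{−s} dt = 0. Define G_R(r) := ∫_0^R g(r/ρ)·ρ^{s−2} dρ for R, r > 0. Then G_R(r) ≥ 0 for all r > 0, with strict positivity for r ∈ (0, 2R), and G_R(r) = R^{s−1}·G_1(r/R). -/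
/-!
The substitution `t = r / ρ` turns `G_R(r)` into `r ^ (s - 1)` times the tail
`∫_{r/R}^∞ g(t) t^{-s} dt`. The integrand of the tail has total integral zero, is negative
before `t₀`, positive between `t₀` and `2` and zero beyond `2`, so every tail starting in
`(0, 2)` is positive and every later one vanishes. The scaling identity is the same
substitution performed once with `R` and once with `R = 1`.
-/

open MeasureTheory Set Real

theorem integral_Ioi_div_eq_integral_Ioo {E : Type*} [NormedAddCommGroup E] [NormedSpace ℝ E]
    (F : ℝ → E) {r c : ℝ} (hr : 0 < r) (hc : 0 < c) :
    ∫ t in Ioi (r / c), F t = ∫ ρ in Ioo 0 c, (r / ρ ^ 2) • F (r / ρ) := by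
  have himage : (fun ρ => r / ρ) '' Ioo 0 c = Ioi (r / c) := by
    have : (fun ρ : ℝ => r / ρ) = (r * ·) ∘ Inv.inv := by ext; simp [div_eq_mul_inv]
    rw [this, image_comp, image_inv_eq_inv, inv_Ioo_0_left hc, image_mul_left_Ioi hr,
      div_eq_mul_inv]
  have hderiv : ∀ ρ ∈ Ioo 0 c,
      HasDerivWithinAt (fun ρ => r / ρ) (-(r / ρ ^ 2)) (Ioo 0 c) ρ := fun ρ hρ => by
    simpa [div_eq_mul_inv] using ((hasDerivAt_inv hρ.1.ne').const_mul r).hasDerivWithinAt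
  have hinj : InjOn (fun ρ => r / ρ) (Ioo 0 c) :=
    StrictAntiOn.injOn fun x hx _ _ hxy => div_lt_div_of_pos_left hr hx.1 hxy
  rw [← himage, integral_image_eq_integral_abs_deriv_smul measurableSet_Ioo hderiv hinj]
  refine setIntegral_congr_fun measurableSet_Ioo fun ρ hρ => ?_
  rw [abs_neg, abs_of_pos (div_pos hr (pow_pos hρ.1 2))]

theorem integral_Ioi_div_mul_rpow_neg (g : ℝ → ℝ) (s : ℝ) {r c : ℝ} (hr : 0 < r) (hc : 0 < c) :
    ∫ t in Ioi (r / c), g t * t ^ (-s)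
      = r ^ (1 - s) * ∫ ρ in Ioo 0 c, g (r / ρ) * ρ ^ (s - 2) := by
  rw [integral_Ioi_div_eq_integral_Ioo _ hr hc, ← integral_const_mul]
  refine setIntegral_congr_fun measurableSet_Ioo fun ρ hρ => ?_
  have hρ : 0 < ρ := hρ.1
  rw [smul_eq_mul, rpow_neg (div_pos hr hρ).le, div_rpow hr.le hρ.le, rpow_sub hr, rpow_one,
    rpow_sub hρ, rpow_two]
  field_simp

theorem integrableOn_mul_rpow_neg_of_monotoneOn {g : ℝ → ℝ} {b s : ℝ} (hb : 0 ≤ b)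
    (hsupp : ∀ t, t ∉ Icc 0 b → g t = 0) (hmono : MonotoneOn g (Icc 0 b)) (hs : s < 1) :
    IntegrableOn (fun t => g t * t ^ (-s)) (Ioi 0) := by
  have hrpow : IntegrableOn (fun t : ℝ => t ^ (-s)) (Ioc 0 b) :=
    (intervalIntegral.intervalIntegrable_rpow' (by linarith)).1
  have hg : IntegrableOn g (Ioc 0 b) :=
    (MonotoneOn.intervalIntegrable (by rwa [uIcc_of_le hb])).1
  have hbound : ∀ᵐ t ∂volume.restrict (Ioc 0 b), ‖g t‖ ≤ max |g 0| |g b| := by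
    filter_upwards [ae_restrict_mem measurableSet_Ioc] with t ht
    have ht' : t ∈ Icc 0 b := Ioc_subset_Icc_self ht
    exact abs_le_max_abs_abs (hmono (left_mem_Icc.2 hb) ht' ht'.1)
      (hmono ht' (right_mem_Icc.2 hb) ht'.2)
  refine IntegrableOn.of_forall_sdiff_eq_zero (hrpow.bdd_mul hg.aestronglyMeasurable hbound)
    measurableSet_Ioi fun t ht => ?_
  have htb : b < t := lt_of_not_ge fun h => ht.2 ⟨ht.1, h⟩
  simp [hsupp t fun h => h.2.not_gt htb]

section SignChange

variable {f : ℝ → ℝ} {a b t₀ : ℝ}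

theorem integral_Ioi_pos_of_integral_eq_zero_of_neg (hf : IntegrableOn f (Ioi 0))
    (hzero : ∫ t in Ioi 0, f t = 0) (ha : 0 < a) (hneg : ∀ t ∈ Ioo 0 a, f t < 0) :
    0 < ∫ t in Ioi a, f t := by
  have hhead : 0 < ∫ t in 0..a, -f t :=
    intervalIntegral.intervalIntegral_pos_of_pos_on
      ((intervalIntegrable_iff_integrableOn_Ioc_of_le ha.le).2
        (hf.mono_set Ioc_subset_Ioi_self)).neg (fun t ht => neg_pos.2 (hneg t ht)) ha
  have hsplit := intervalIntegral.integral_interval_add_Ioi hf (hf.mono_set (Ioi_subset_Ioi ha.le))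
  rw [intervalIntegral.integral_neg] at hhead
  linarith

theorem integral_Ioi_pos_of_pos_of_eq_zero (hf : IntegrableOn f (Ioi a)) (hab : a < b)
    (hpos : ∀ t ∈ Ioo a b, 0 < f t) (hvanish : ∀ t > b, f t = 0) :
    0 < ∫ t in Ioi a, f t := by
  rw [← intervalIntegral.integral_interval_add_Ioi hf (hf.mono_set (Ioi_subset_Ioi hab.le)),
    setIntegral_eq_zero_of_forall_eq_zero (t := Ioi b) hvanish, add_zero]
  exact intervalIntegral.intervalIntegral_pos_of_pos_on
    ((intervalIntegrable_iff_integrableOn_Ioc_of_le hab.le).2 (hf.mono_set Ioc_subset_Ioi_self))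
    hpos hab

theorem integral_Ioi_pos_of_sign_change (hf : IntegrableOn f (Ioi 0))
    (hzero : ∫ t in Ioi 0, f t = 0) (hneg : ∀ t ∈ Ioo 0 t₀, f t < 0)
    (hpos : ∀ t ∈ Ioo t₀ b, 0 < f t) (hvanish : ∀ t > b, f t = 0) (ha : a ∈ Ioo 0 b) :
    0 < ∫ t in Ioi a, f t := by
  rcases le_or_gt a t₀ with hat | hta
  · exact integral_Ioi_pos_of_integral_eq_zero_of_neg hf hzero ha.1
      fun t ht => hneg t ⟨ht.1, ht.2.trans_le hat⟩
  · exact integral_Ioi_pos_of_pos_of_eq_zero (hf.mono_set (Ioi_subset_Ioi ha.1.le)) ha.2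
      (fun t ht => hpos t ⟨hta.trans ht.1, ht.2⟩) hvanish

theorem integral_Ioi_nonneg_of_sign_change (hf : IntegrableOn f (Ioi 0))
    (hzero : ∫ t in Ioi 0, f t = 0) (hneg : ∀ t ∈ Ioo 0 t₀, f t < 0)
    (hpos : ∀ t ∈ Ioo t₀ b, 0 < f t) (hvanish : ∀ t > b, f t = 0) (ha : 0 < a) :
    0 ≤ ∫ t in Ioi a, f t := by
  rcases lt_or_ge a b with hab | hba
  · exact (integral_Ioi_pos_of_sign_change hf hzero hneg hpos hvanish ⟨ha, hab⟩).le
  · exact (setIntegral_eq_zero_of_forall_eq_zero fun t ht => hvanish t (hba.trans_lt ht)).ge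

end SignChange

theorem G_nonneg_and_scaling_general (g : ℝ → ℝ) (t₀ : ℝ) (ht₀ : t₀ ∈ Set.Ioo (0 : ℝ) 2)
    (hsupp : ∀ t, t ∉ Set.Icc (0 : ℝ) 2 → g t = 0)
    (hmono : MonotoneOn g (Set.Icc (0 : ℝ) 2))
    (hneg : ∀ t ∈ Set.Ioo (0 : ℝ) t₀, g t < 0)
    (hpos : ∀ t ∈ Set.Ioo t₀ (2 : ℝ), 0 < g t)
    (s : ℝ) (hs : s ∈ Set.Ioo (0 : ℝ) 1)
    (hzero : (∫ t in Set.Ioi (0 : ℝ), g t * t ^ (-s)) = 0)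
    (G : ℝ → ℝ → ℝ)
    (hG : G = fun R r => ∫ ρ in Set.Ioo (0 : ℝ) R, g (r / ρ) * ρ ^ (s - 2)) :
    ∀ R > (0 : ℝ), ∀ r > (0 : ℝ),
      0 ≤ G R r ∧ (r < 2 * R → 0 < G R r) ∧ G R r = R ^ (s - 1) * G 1 (r / R) := by
  intro R hR r hr
  subst hG
  have hf := integrableOn_mul_rpow_neg_of_monotoneOn zero_le_two hsupp hmono hs.2
  have hfneg : ∀ t ∈ Ioo 0 t₀, g t * t ^ (-s) < 0 := fun t ht =>
    mul_neg_of_neg_of_pos (hneg t ht) (rpow_pos_of_pos ht.1 _)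
  have hfpos : ∀ t ∈ Ioo t₀ 2, 0 < g t * t ^ (-s) := fun t ht =>
    mul_pos (hpos t ht) (rpow_pos_of_pos (ht₀.1.trans ht.1) _)
  have hfvanish : ∀ t > 2, g t * t ^ (-s) = 0 := fun t ht => by
    rw [hsupp t fun h => h.2.not_gt ht, zero_mul]
  have htail_R := integral_Ioi_div_mul_rpow_neg g s hr hR
  have htail_1 := integral_Ioi_div_mul_rpow_neg g s (div_pos hr hR) one_pos
  rw [div_one] at htail_1
  have hr_pow : 0 < r ^ (1 - s) := rpow_pos_of_pos hr _
  refine ⟨?_, fun hlt => ?_, ?_⟩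
  · refine (mul_nonneg_iff_of_pos_left hr_pow).1 (htail_R ▸ ?_)
    exact integral_Ioi_nonneg_of_sign_change hf hzero hfneg hfpos hfvanish (div_pos hr hR)
  · refine (mul_pos_iff_of_pos_left hr_pow).1 (htail_R ▸ ?_)
    exact integral_Ioi_pos_of_sign_change hf hzero hfneg hfpos hfvanish
      ⟨div_pos hr hR, (div_lt_iff₀ hR).2 (by linarith)⟩
  · refine mul_left_cancel₀ hr_pow.ne' ?_
    rw [← htail_R, htail_1, div_rpow hr.le hR.le, ← neg_sub 1 s, rpow_neg hR.le]
    field_simp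

/-- Positivity and scaling of `G_R(r) = ∫_0^R g(r/ρ) ρ^{s-2} dρ` for a function `g`
supported on `[0,2]`, continuous and increasing there with a single sign change at
`t₀`, when `s ∈ (0,1)` satisfies `∫_0^∞ g(t) t^{-s} dt = 0`. -/
theorem G_nonneg_and_scaling (g : ℝ → ℝ) (t₀ : ℝ) (ht₀ : t₀ ∈ Set.Ioo (0 : ℝ) 2)
    (hsupp : ∀ t, t ∉ Set.Icc (0 : ℝ) 2 → g t = 0)
    (hcont : ContinuousOn g (Set.Icc (0 : ℝ) 2))
    (hmono : MonotoneOn g (Set.Icc (0 : ℝ) 2))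
    (hneg : ∀ t ∈ Set.Ioo (0 : ℝ) t₀, g t < 0)
    (hpos : ∀ t ∈ Set.Ioo t₀ (2 : ℝ), 0 < g t)
    (s : ℝ) (hs : s ∈ Set.Ioo (0 : ℝ) 1)
    (hzero : (∫ t in Set.Ioi (0 : ℝ), g t * t ^ (-s)) = 0)
    (G : ℝ → ℝ → ℝ)
    (hG : G = fun R r => ∫ ρ in Set.Ioo (0 : ℝ) R, g (r / ρ) * ρ ^ (s - 2)) :
    ∀ R > (0 : ℝ), ∀ r > (0 : ℝ),
      0 ≤ G R r ∧ (r < 2 * R → 0 < G R r) ∧ G R r = R ^ (s - 1) * G 1 (r / R) :=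
  G_nonneg_and_scaling_general g t₀ ht₀ hsupp hmono hneg hpos s hs hzero G hG
end

section
/- The map f : B(0,R) → R^d defined by f(x) = L·x + q(x, u_0)·u_0 is measure preserving (has Jacobian of absolute value 1 almost everywhere), where L is projection onto the hyperplane orthogonal to the unit vector u_0 and q(x, u_0) is the distance from x to the boundary of the ball B(0,R) in direction u_0. -/
open MeasureTheory Set Metric
open scoped RealInnerProductSpace

/-!
On the ball, `f x = x + σ x • u₀` with `σ x = √(R² - ‖L x‖²) - 2 ⟪x, u₀⟫`, which is smooth there
and satisfies `σ (x + t • u₀) = σ x - 2 t`. So `Df = id + (Dσ) ⊗ u₀` with `Dσ u₀ = -2`, an oblique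
reflection: it squares to the identity, hence `|det Df| = 1`. Moreover `f` is injective on the ball,
since `L (f x) = L x` and `⟪f x, u₀⟫ = √(R² - ‖L x‖²) - ⟪x, u₀⟫`. The change of variables formula
concludes.
-/

theorem ContinuousLinearMap.abs_det_eq_one_of_comp_self {E : Type*} [AddCommGroup E]
    [Module ℝ E] [TopologicalSpace E] {T : E →L[ℝ] E} (hT : T.comp T = .id ℝ E) :
    |T.det| = 1 := by
  have h : T.det * T.det = 1 := by
    simpa [ContinuousLinearMap.det, LinearMap.det_comp] using congrArg ContinuousLinearMap.det hT
  rcases mul_self_eq_one_iff.mp h with h | h <;> simp [h]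

theorem ContinuousLinearMap.id_add_smulRight_comp_self {𝕜 E : Type*} [CommRing 𝕜]
    [TopologicalSpace 𝕜] [AddCommGroup E] [Module 𝕜 E] [TopologicalSpace E] [ContinuousSMul 𝕜 E]
    [ContinuousAdd E] {p : E →L[𝕜] 𝕜} {v : E} (hp : p v = -2) :
    (.id 𝕜 E + p.smulRight v).comp (.id 𝕜 E + p.smulRight v) = .id 𝕜 E := by
  ext x
  simp [hp]
  module

theorem fderiv_apply_eq_of_add_smul {𝕜 E F : Type*} [NontriviallyNormedField 𝕜]
    [NormedAddCommGroup E] [NormedSpace 𝕜 E] [NormedAddCommGroup F] [NormedSpace 𝕜 F]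
    {g : E → F} {x v : E} {c : F} (hg : DifferentiableAt 𝕜 g x)
    (hline : ∀ t : 𝕜, g (x + t • v) = g x + t • c) : fderiv 𝕜 g x v = c := by
  rw [← hg.lineDeriv_eq_fderiv, lineDeriv]
  simp_rw [hline, deriv_const_add]
  simpa using ((hasDerivAt_id (0 : 𝕜)).smul_const c).deriv

theorem MeasureTheory.Measure.map_restrict_eq_restrict_image_of_abs_det_eq_one
    {E : Type*} [NormedAddCommGroup E] [NormedSpace ℝ E] [FiniteDimensional ℝ E]
    [MeasurableSpace E] [BorelSpace E] (μ : Measure E) [μ.IsAddHaarMeasure]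
    {s : Set E} {f : E → E} {f' : E → E →L[ℝ] E} (hs : MeasurableSet s)
    (hf' : ∀ x ∈ s, HasFDerivWithinAt f (f' x) s x) (hdet : ∀ x ∈ s, |(f' x).det| = 1)
    (hf : InjOn f s) : map f (μ.restrict s) = μ.restrict (f '' s) := by
  have hdens : (fun x ↦ ENNReal.ofReal |(f' x).det|) =ᵐ[μ.restrict s] 1 :=
    (ae_restrict_mem hs).mono fun x hx ↦ by simp [hdet x hx]
  rw [← map_withDensity_abs_det_fderiv_eq_addHaar μ hs.nullMeasurableSet hf' hf,
    withDensity_congr_ae hdens, withDensity_one]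

section Ball

variable {E : Type*} [NormedAddCommGroup E] [InnerProductSpace ℝ E] {u : E}

theorem inner_add_smul_of_norm_eq_one (hu : ‖u‖ = 1) (x : E) (t : ℝ) :
    ⟪x + t • u, u⟫ = ⟪x, u⟫ + t := by
  rw [inner_add_left, real_inner_smul_left, real_inner_self_eq_norm_sq, hu, one_pow, mul_one]

theorem add_smul_sub_inner_smul (hu : ‖u‖ = 1) (x : E) (t : ℝ) :
    x + t • u - ⟪x + t • u, u⟫ • u = x - ⟪x, u⟫ • u := by
  rw [inner_add_smul_of_norm_eq_one hu]
  module

theorem norm_sq_eq_norm_sub_inner_smul_sq_add (hu : ‖u‖ = 1) (x : E) :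
    ‖x‖ ^ 2 = ‖x - ⟪x, u⟫ • u‖ ^ 2 + ⟪x, u⟫ ^ 2 := by
  rw [norm_sub_sq_real, real_inner_smul_right, norm_smul, hu, Real.norm_eq_abs, mul_one, sq_abs]
  ring

/-- Half the length of the chord of `ball 0 R` through `x` in direction `u`. -/
noncomputable def halfChord (R : ℝ) (u x : E) : ℝ :=
  √(R ^ 2 - ‖x - ⟪x, u⟫ • u‖ ^ 2)

theorem halfChord_add_smul (hu : ‖u‖ = 1) (R : ℝ) (x : E) (t : ℝ) :
    halfChord R u (x + t • u) = halfChord R u x := by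
  rw [halfChord, halfChord, add_smul_sub_inner_smul hu]

theorem add_smul_mem_ball_zero_iff (hu : ‖u‖ = 1) {R : ℝ} (hR : 0 ≤ R) (x : E) (t : ℝ) :
    x + t • u ∈ ball 0 R ↔ -halfChord R u x < ⟪x, u⟫ + t ∧ ⟪x, u⟫ + t < halfChord R u x := by
  rw [halfChord, ← Real.sq_lt, mem_ball_zero_iff, ← sq_lt_sq₀ (norm_nonneg _) hR,
    norm_sq_eq_norm_sub_inner_smul_sq_add hu, add_smul_sub_inner_smul hu,
    inner_add_smul_of_norm_eq_one hu]
  constructor <;> intro h <;> linarith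

theorem abs_inner_lt_halfChord (hu : ‖u‖ = 1) {R : ℝ} {x : E} (hx : x ∈ ball 0 R) :
    |⟪x, u⟫| < halfChord R u x := by
  have hR : 0 ≤ R := (nonempty_ball.mp ⟨x, hx⟩).le
  simpa [abs_lt, and_comm] using (add_smul_mem_ball_zero_iff hu hR x 0).mp (by simpa using hx)

theorem differentiableAt_halfChord (hu : ‖u‖ = 1) {R : ℝ} {x : E} (hx : x ∈ ball 0 R) :
    DifferentiableAt ℝ (halfChord R u) x := by
  have hpos : 0 < R ^ 2 - ‖x - ⟪x, u⟫ • u‖ ^ 2 :=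
    Real.sqrt_pos.mp ((abs_nonneg _).trans_lt (abs_inner_lt_halfChord hu hx))
  have hinner : DifferentiableAt ℝ (fun y : E ↦ ⟪y, u⟫) x :=
    differentiableAt_id.inner ℝ (differentiableAt_const u)
  exact ((differentiableAt_const _).sub
    ((differentiableAt_id.sub (hinner.smul_const u)).norm_sq ℝ)).sqrt hpos.ne'

noncomputable def exitTime (R : ℝ) (u x : E) : ℝ :=
  sInf {t : ℝ | 0 ≤ t ∧ x + t • u ∉ ball 0 R}

theorem exitTime_eq (hu : ‖u‖ = 1) {R : ℝ} {x : E} (hx : x ∈ ball 0 R) :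
    exitTime R u x = halfChord R u x - ⟪x, u⟫ := by
  have hR : 0 ≤ R := (nonempty_ball.mp ⟨x, hx⟩).le
  have hx' := abs_lt.mp (abs_inner_lt_halfChord hu hx)
  have hset : {t : ℝ | 0 ≤ t ∧ x + t • u ∉ ball 0 R} = Ici (halfChord R u x - ⟪x, u⟫) := by
    ext t
    simp only [mem_ofPred_eq, mem_Ici, add_smul_mem_ball_zero_iff hu hR, not_and_or, not_lt]
    constructor
    · rintro ⟨ht, h | h⟩ <;> linarith
    · intro h
      exact ⟨by linarith, Or.inr (by linarith)⟩
  rw [exitTime, hset, csInf_Ici]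

noncomputable def exitShift (R : ℝ) (u x : E) : ℝ :=
  halfChord R u x - 2 * ⟪x, u⟫

theorem differentiableAt_exitShift (hu : ‖u‖ = 1) {R : ℝ} {x : E} (hx : x ∈ ball 0 R) :
    DifferentiableAt ℝ (exitShift R u) x :=
  (differentiableAt_halfChord hu hx).sub
    ((differentiableAt_id.inner ℝ (differentiableAt_const u)).const_mul 2)

theorem exitShift_add_smul (hu : ‖u‖ = 1) (R : ℝ) (x : E) (t : ℝ) :
    exitShift R u (x + t • u) = exitShift R u x + t • (-2) := by
  rw [exitShift, exitShift, halfChord_add_smul hu, inner_add_smul_of_norm_eq_one hu, smul_eq_mul]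
  ring

theorem fderiv_exitShift_apply (hu : ‖u‖ = 1) {R : ℝ} {x : E} (hx : x ∈ ball 0 R) :
    fderiv ℝ (exitShift R u) x u = -2 :=
  fderiv_apply_eq_of_add_smul (differentiableAt_exitShift hu hx) (exitShift_add_smul hu R x)

noncomputable def exitMap (R : ℝ) (u x : E) : E :=
  x - ⟪x, u⟫ • u + exitTime R u x • u

theorem exitMap_eq (hu : ‖u‖ = 1) {R : ℝ} {x : E} (hx : x ∈ ball 0 R) :
    exitMap R u x = x + exitShift R u x • u := by
  rw [exitMap, exitTime_eq hu hx, exitShift]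
  module

theorem injOn_exitMap (hu : ‖u‖ = 1) (R : ℝ) : InjOn (exitMap R u) (ball 0 R) := by
  intro x hx y hy hxy
  rw [exitMap_eq hu hx, exitMap_eq hu hy] at hxy
  have hL : x - ⟪x, u⟫ • u = y - ⟪y, u⟫ • u := by
    rw [← add_smul_sub_inner_smul hu x (exitShift R u x), hxy, add_smul_sub_inner_smul hu]
  have hinner : ⟪x, u⟫ = ⟪y, u⟫ := by
    have h := congrArg (⟪·, u⟫) hxy
    have hc : halfChord R u x = halfChord R u y := by rw [halfChord, halfChord, hL]
    simp only [inner_add_smul_of_norm_eq_one hu, exitShift, hc] at h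
    linarith
  rw [hinner] at hL
  exact sub_left_injective hL

theorem hasFDerivWithinAt_exitMap (hu : ‖u‖ = 1) {R : ℝ} {x : E} (hx : x ∈ ball 0 R) :
    HasFDerivWithinAt (exitMap R u) (.id ℝ E + (fderiv ℝ (exitShift R u) x).smulRight u)
      (ball 0 R) x :=
  ((hasFDerivAt_id x).add ((differentiableAt_exitShift hu hx).hasFDerivAt.smul_const u))
    |>.hasFDerivWithinAt.congr (fun _ hy ↦ exitMap_eq hu hy) (exitMap_eq hu hx)

theorem map_restrict_ball_exitMap [FiniteDimensional ℝ E] [MeasurableSpace E] [BorelSpace E]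
    (μ : Measure E) [μ.IsAddHaarMeasure] (hu : ‖u‖ = 1) (R : ℝ) :
    Measure.map (exitMap R u) (μ.restrict (ball 0 R)) = μ.restrict (exitMap R u '' ball 0 R) :=
  μ.map_restrict_eq_restrict_image_of_abs_det_eq_one measurableSet_ball
    (fun _ hx ↦ hasFDerivWithinAt_exitMap hu hx)
    (fun _ hx ↦ ContinuousLinearMap.abs_det_eq_one_of_comp_self
      (ContinuousLinearMap.id_add_smulRight_comp_self (fderiv_exitShift_apply hu hx)))
    (injOn_exitMap hu R)

end Ball

theorem exit_map_measure_preserving_general (d : ℕ) (R : ℝ)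
    (u₀ : EuclideanSpace ℝ (Fin d)) (hu₀ : ‖u₀‖ = 1)
    (q : EuclideanSpace ℝ (Fin d) → ℝ)
    (hq : q = fun x => sInf {t : ℝ | 0 ≤ t ∧ x + t • u₀ ∉ Metric.ball (0 : EuclideanSpace ℝ (Fin d)) R})
    (f : EuclideanSpace ℝ (Fin d) → EuclideanSpace ℝ (Fin d))
    (hf : f = fun x => (x - (inner ℝ x u₀ : ℝ) • u₀) + q x • u₀) :
    Measure.map f (volume.restrict (Metric.ball (0 : EuclideanSpace ℝ (Fin d)) R))
      = volume.restrict (f '' Metric.ball (0 : EuclideanSpace ℝ (Fin d)) R) := by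
  obtain rfl : f = exitMap R u₀ := by rw [hf, hq]; rfl
  exact map_restrict_ball_exitMap volume hu₀ R

/-- The map `f(x) = L x + q(x,u₀) u₀`, sending a point of the ball to the pair
(projection orthogonal to `u₀`, exit distance in direction `u₀`), preserves
Lebesgue measure: the image of the restriction of `volume` to the ball is the
restriction of `volume` to the image of the ball. -/
theorem exit_map_measure_preserving (d : ℕ) (hd : 1 ≤ d) (R : ℝ) (hR : 0 < R)
    (u₀ : EuclideanSpace ℝ (Fin d)) (hu₀ : ‖u₀‖ = 1)
    (q : EuclideanSpace ℝ (Fin d) → ℝ)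
    (hq : q = fun x => sInf {t : ℝ | 0 ≤ t ∧ x + t • u₀ ∉ Metric.ball (0 : EuclideanSpace ℝ (Fin d)) R})
    (f : EuclideanSpace ℝ (Fin d) → EuclideanSpace ℝ (Fin d))
    (hf : f = fun x => (x - (inner ℝ x u₀ : ℝ) • u₀) + q x • u₀) :
    Measure.map f (volume.restrict (Metric.ball (0 : EuclideanSpace ℝ (Fin d)) R))
      = volume.restrict (f '' Metric.ball (0 : EuclideanSpace ℝ (Fin d)) R) :=
  exit_map_measure_preserving_general d R u₀ hu₀ q hq f hf
end
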